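/- arXiv:1909.06568 — 2 statements merged into one kernel-verified Lean document; each statement's English description precedes it below -/
import Mathlib

section
/- Let G = (V,E) be a graph and consider any alternative forcing process started from initial blue set S ⊆ V. Then for any subsets S, T ⊆ V and every ℓ ≥ 0, P(A(S,T,ℓ)) ≤ P(Ã(S,T,ℓ)), where A(S,T,ℓ) is the event that T is entirely blue after ℓ rounds of standard probabilistic zero forcing started at S, and Ã(S,T,ℓ) is the corresponding event for the alternative forcing process started at S. -/
open Finset Filter Real
open scoped Classical

namespace PZF

variable {V : Type*} [Fintype V] [DecidableEq V]

/-- The closed degree of `u` into the set `B`, i.e. `|N[u] ∩ B|`. -/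
noncomputable def closedDegIn (G : SimpleGraph V) (B : Finset V) (u : V) : ℕ :=
  ((insert u (G.neighborSet u)) ∩ (B : Set V)).ncard

/-- The degree of `u` in `G`. -/
noncomputable def deg (G : SimpleGraph V) (u : V) : ℕ :=
  (G.neighborSet u).ncard

/-- The probability that the blue vertex `u` forces its white neighbour `v` in one round of
probabilistic zero forcing, when the current blue set is `B`: it equals `|N[u] ∩ B| / deg u`
when `u` is blue, `v` is a white neighbour of `u`, and `0` otherwise. -/
noncomputable def edgeForceProb (G : SimpleGraph V) (B : Finset V) (u v : V) : ℝ :=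
  if G.Adj u v ∧ u ∈ B ∧ v ∉ B then (closedDegIn G B u : ℝ) / (deg G u : ℝ) else 0

/-- Given per-ordered-pair forcing probabilities `q u v` (each attempt independent), the
probability that one round starting from the blue set `B` produces exactly the blue set `B'`. -/
noncomputable def stepOfQ (q : V → V → ℝ) (B B' : Finset V) : ℝ :=
  if B ⊆ B' then
    (∏ v ∈ B' \ B, (1 - ∏ u ∈ B, (1 - q u v))) * ∏ v ∈ B'ᶜ, ∏ u ∈ B, (1 - q u v)
  else 0

/-- The transition rule of standard probabilistic zero forcing, as a function of the history
(the list of blue sets so far; only the current blue set matters). -/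
noncomputable def stdStep (G : SimpleGraph V) (hist : List (Finset V)) (B' : Finset V) : ℝ :=
  stepOfQ (edgeForceProb G (hist.getLastD ∅)) (hist.getLastD ∅) B'

/-- Probability of a given future trajectory, given the history so far. -/
noncomputable def seqProbAux (step : List (Finset V) → Finset V → ℝ) :
    List (Finset V) → List (Finset V) → ℝ
  | _, [] => 1
  | hist, B :: rest => step hist B * seqProbAux step (hist ++ [B]) rest

/-- The probability that, running the process given by the transition rule `step` from the
initial blue set `S` for `ℓ` rounds, the resulting trajectory (including the initial set)
satisfies the predicate `E`. -/
noncomputable def trajEventProb (step : List (Finset V) → Finset V → ℝ) (S : Finset V)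
    (ℓ : ℕ) (E : List (Finset V) → Prop) : ℝ :=
  ∑ f : Fin ℓ → Finset V,
    if E (S :: List.ofFn f) then seqProbAux step [S] (List.ofFn f) else 0

/-- `P(A(S,T,ℓ))`: the probability that, starting probabilistic zero forcing from the blue
set `S`, after `ℓ` rounds every vertex of `T` is blue. -/
noncomputable def probForced (G : SimpleGraph V) (S T : Finset V) (ℓ : ℕ) : ℝ :=
  trajEventProb (stdStep G) S ℓ fun traj => T ⊆ traj.getLastD ∅

/-- `P(pt_pzf(G,S) ≤ ℓ)`: the probability that all vertices are blue after `ℓ` rounds. -/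
noncomputable def probAllBlue (G : SimpleGraph V) (S : Finset V) (ℓ : ℕ) : ℝ :=
  probForced G S Finset.univ ℓ

/-- The probability of a fixed graph `G` under the Erdős–Rényi measure `G(n,p)`. -/
noncomputable def erProb (n : ℕ) (p : ℝ) (G : SimpleGraph (Fin n)) : ℝ :=
  p ^ G.edgeSet.ncard * (1 - p) ^ (n.choose 2 - G.edgeSet.ncard)

/-- The probability that `G(n,p)` satisfies the property `E`. -/
noncomputable def graphProb (n : ℕ) (p : ℝ) (E : SimpleGraph (Fin n) → Prop) : ℝ :=
  ∑ G : SimpleGraph (Fin n), if E G then erProb n p G else 0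

/-- `P(pt_pzf(G(n,p), v) ≤ ℓ)`: the joint probability (over the random graph and the forcing
randomness) that probabilistic zero forcing started at `{v}` turns all of `G(n,p)` blue
within `ℓ` rounds. -/
noncomputable def prPZFwithin (n : ℕ) (p : ℝ) (v : Fin n) (ℓ : ℕ) : ℝ :=
  ∑ G : SimpleGraph (Fin n), erProb n p G * probAllBlue G {v} ℓ

/-- An alternative forcing process on `G` : an index set `I ⊆ ℕ` of rounds at which the
alternative rule is used, together with edge-forcing probabilities `q i hist u v` which may
depend on the whole history of blue sets `hist = [B₀, …, B_i]`.  In rounds `i ∉ I` the standard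
probabilities are used; in rounds `i ∈ I` each boundary edge `e ∈ E(B_i, V \\ B_i)` is forced
independently with a probability `Q̃_e` satisfying `Q_e ≤ Q̃_e ≤ 1`, and `Q̃_e = 0` on all
other pairs. -/
structure AltForcing (G : SimpleGraph V) where
  I : Set ℕ
  q : ℕ → List (Finset V) → V → V → ℝ
  q_std : ∀ i ∉ I, ∀ hist u v, q i hist u v = edgeForceProb G (hist.getLastD ∅) u v
  q_lower : ∀ i ∈ I, ∀ hist u v, edgeForceProb G (hist.getLastD ∅) u v ≤ q i hist u v
  q_upper : ∀ i ∈ I, ∀ hist u v, q i hist u v ≤ 1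
  q_zero : ∀ i ∈ I, ∀ hist u v,
    ¬(G.Adj u v ∧ u ∈ hist.getLastD ∅ ∧ v ∉ hist.getLastD ∅) → q i hist u v = 0

/-- The transition rule of an alternative forcing process: in round `i + 1` (the history
`hist = [B₀, …, B_i]` has length `i + 1`) each pair is forced independently with probability
`q i hist u v`, and forced white vertices turn blue. -/
noncomputable def altStep (G : SimpleGraph V) (A : AltForcing G)
    (hist : List (Finset V)) (B' : Finset V) : ℝ :=
  stepOfQ (A.q (hist.length - 1) hist) (hist.getLastD ∅) B'

end PZF

/-!
Both processes are Markov chains on blue sets in which one round from the blue set `B` produces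
`B ∪ W`, where `W ⊆ Bᶜ` contains each white `v` independently with probability
`1 - ∏_{u ∈ B} (1 - q u v)`. These vertex probabilities grow with `B` and with `q`, so the
vertex coins of a standard round from `B` can be coupled below those of an alternative round
from any `C ⊇ B`, keeping the standard blue set inside the alternative one. Backward induction
on the number of remaining rounds turns this into the inequality for the probability that `T`
is blue at the end.
-/

namespace PZF

variable {V : Type*}

theorem closedDegIn_le_deg [Fintype V] {G : SimpleGraph V} {B : Finset V} {u v : V}
    (huv : G.Adj u v) (hv : v ∉ B) :
    closedDegIn G B u ≤ deg G u := by
  have hlt : closedDegIn G B u < (insert u (G.neighborSet u)).ncard :=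
    Set.ncard_lt_ncard <| Set.ssubset_iff_exists.mpr ⟨Set.inter_subset_left, v,
      Set.mem_insert_of_mem u huv, fun hv' => hv hv'.2⟩
  rw [Set.ncard_insert_of_notMem G.notMem_neighborSet_self] at hlt
  exact Nat.lt_succ_iff.mp hlt

noncomputable def forceProb (q : V → V → ℝ) (B : Finset V) (v : V) : ℝ :=
  1 - ∏ u ∈ B, (1 - q u v)

theorem forceProb_nonneg {q : V → V → ℝ} {B : Finset V} {v : V}
    (hq : ∀ u ∈ B, 0 ≤ q u v ∧ q u v ≤ 1) : 0 ≤ forceProb q B v :=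
  sub_nonneg.mpr <| prod_le_one (fun u hu => sub_nonneg.mpr (hq u hu).2)
    fun u hu => sub_le_self 1 (hq u hu).1

theorem forceProb_le_one {q : V → V → ℝ} {B : Finset V} {v : V} (hq : ∀ u ∈ B, q u v ≤ 1) :
    forceProb q B v ≤ 1 :=
  sub_le_self 1 <| prod_nonneg fun u hu => sub_nonneg.mpr (hq u hu)

variable [DecidableEq V]

theorem forceProb_mono {q₁ q₂ : V → V → ℝ} {B C : Finset V} {v : V} (hBC : B ⊆ C)
    (hq : ∀ u ∈ B, q₁ u v ≤ q₂ u v) (hq₂ : ∀ u ∈ C, 0 ≤ q₂ u v ∧ q₂ u v ≤ 1) :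
    forceProb q₁ B v ≤ forceProb q₂ C v := by
  refine sub_le_sub_left ?_ 1
  calc ∏ u ∈ C, (1 - q₂ u v)
      = (∏ u ∈ C \ B, (1 - q₂ u v)) * ∏ u ∈ B, (1 - q₂ u v) := (prod_sdiff hBC).symm
    _ ≤ ∏ u ∈ B, (1 - q₂ u v) :=
        mul_le_of_le_one_left (prod_nonneg fun u hu => sub_nonneg.mpr (hq₂ u (hBC hu)).2)
          (prod_le_one (fun u hu => sub_nonneg.mpr (hq₂ u (mem_sdiff.mp hu).1).2)
            fun u hu => sub_le_self 1 (hq₂ u (mem_sdiff.mp hu).1).1)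
    _ ≤ ∏ u ∈ B, (1 - q₁ u v) :=
        prod_le_prod (fun u hu => sub_nonneg.mpr (hq₂ u (hBC hu)).2)
          fun u hu => sub_le_sub_left (hq u hu) 1

/-- The expectation of `g W` for a random `W ⊆ s` containing each `v ∈ s` independently with
probability `p v`. -/
noncomputable def subsetExpect (p : V → ℝ) (g : Finset V → ℝ) (s : Finset V) : ℝ :=
  ∑ W ∈ s.powerset, (∏ v ∈ W, p v) * ((∏ v ∈ s \ W, (1 - p v)) * g W)

theorem subsetExpect_empty (p : V → ℝ) (g : Finset V → ℝ) : subsetExpect p g ∅ = g ∅ := by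
  simp [subsetExpect]

theorem subsetExpect_insert (p : V → ℝ) (g : Finset V → ℝ) {a : V} {s : Finset V}
    (ha : a ∉ s) :
    subsetExpect p g (insert a s) =
      p a * subsetExpect p (fun W => g (insert a W)) s + (1 - p a) * subsetExpect p g s := by
  rw [subsetExpect, sum_powerset_insert ha, add_comm, subsetExpect, subsetExpect, mul_sum,
    mul_sum]
  congr 1
  all_goals refine sum_congr rfl fun W hW => ?_
  all_goals have haW : a ∉ W := fun h => ha (mem_powerset.mp hW h)
  · rw [insert_sdiff_insert, sdiff_insert_of_notMem ha, prod_insert haW]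
    ring
  · rw [insert_sdiff_of_notMem _ haW, prod_insert fun h => ha (mem_sdiff.mp h).1]
    ring

/-- The coins of the coordinates `v ∈ t` can be coupled so that `v ∈ W` implies `v ∈ W'`,
which gives `W ∩ t ⊆ W'`. -/
theorem subsetExpect_le_subsetExpect {p r : V → ℝ} {g h : Finset V → ℝ} {s t : Finset V}
    (hts : t ⊆ s) (hp : ∀ v ∈ s, 0 ≤ p v ∧ p v ≤ 1) (hpr : ∀ v ∈ t, p v ≤ r v)
    (hr : ∀ v ∈ t, r v ≤ 1) (hgh : ∀ X ⊆ s, ∀ Y, X ∩ t ⊆ Y → g X ≤ h Y) :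
    subsetExpect p g s ≤ subsetExpect r h t := by
  induction s using Finset.induction_on generalizing t g h with
  | empty =>
    obtain rfl := subset_empty.mp hts
    simpa only [subsetExpect_empty] using hgh ∅ subset_rfl ∅ (by simp)
  | @insert a s ha ih =>
    have hps : ∀ v ∈ s, 0 ≤ p v ∧ p v ≤ 1 := fun v hv => hp v (mem_insert_of_mem hv)
    obtain ⟨hpa₀, hpa₁⟩ := hp a (mem_insert_self a s)
    rw [subsetExpect_insert p g ha]
    by_cases hat : a ∈ t
    · set t' := t.erase a
      have ht' : t' ⊆ s := fun v hv =>
        (mem_insert.mp (hts (mem_of_mem_erase hv))).resolve_left (ne_of_mem_erase hv)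
      have hsplit : ∀ X, X ∩ t ⊆ insert a (X ∩ t') := fun X v hv => by
        by_cases hva : v = a
        · exact hva ▸ mem_insert_self _ _
        · exact mem_insert_of_mem (mem_inter.mpr ⟨(mem_inter.mp hv).1,
            mem_erase.mpr ⟨hva, (mem_inter.mp hv).2⟩⟩)
      have hpr' : ∀ v ∈ t', p v ≤ r v := fun v hv => hpr v (mem_of_mem_erase hv)
      have hr' : ∀ v ∈ t', r v ≤ 1 := fun v hv => hr v (mem_of_mem_erase hv)
      have hforced : subsetExpect p (fun W => g (insert a W)) s ≤
          subsetExpect r (fun W => h (insert a W)) t' :=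
        ih ht' hps hpr' hr' fun X hX Y hXY => hgh _ (insert_subset_insert a hX) _
          ((hsplit _).trans (by
            rw [insert_inter_of_notMem (notMem_erase a t)]
            exact insert_subset_insert a hXY))
      have hmixed : subsetExpect p g s ≤ subsetExpect r (fun W => h (insert a W)) t' :=
        ih ht' hps hpr' hr' fun X hX Y hXY =>
          hgh X (hX.trans (subset_insert a s)) _ ((hsplit X).trans (insert_subset_insert a hXY))
      have hwhite : subsetExpect p g s ≤ subsetExpect r h t' :=
        ih ht' hps hpr' hr' fun X hX Y hXY => hgh X (hX.trans (subset_insert a s)) Y fun v hv =>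
          hXY (mem_inter.mpr ⟨(mem_inter.mp hv).1, mem_erase.mpr
            ⟨fun hva => ha (hva ▸ hX (mem_inter.mp hv).1), (mem_inter.mp hv).2⟩⟩)
      have hra₁ := hr a hat
      have hpra := hpr a hat
      rw [← insert_erase hat, subsetExpect_insert r h (notMem_erase a t)]
      nlinarith [mul_le_mul_of_nonneg_left hforced hpa₀,
        mul_le_mul_of_nonneg_left hmixed (sub_nonneg.mpr hpra),
        mul_le_mul_of_nonneg_left hwhite (sub_nonneg.mpr hra₁)]
    · have hts' : t ⊆ s := fun v hv =>
        (mem_insert.mp (hts hv)).resolve_left fun hva => hat (hva ▸ hv)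
      have hforced : subsetExpect p (fun W => g (insert a W)) s ≤ subsetExpect r h t :=
        ih hts' hps hpr hr fun X hX Y hXY =>
          hgh _ (insert_subset_insert a hX) Y (by rwa [insert_inter_of_notMem hat])
      have hwhite : subsetExpect p g s ≤ subsetExpect r h t :=
        ih hts' hps hpr hr fun X hX => hgh X (hX.trans (subset_insert a s))
      nlinarith [mul_le_mul_of_nonneg_left hforced hpa₀,
        mul_le_mul_of_nonneg_left hwhite (sub_nonneg.mpr hpa₁)]

theorem stepOfQ_union [Fintype V] (q : V → V → ℝ) {B W : Finset V} (hW : W ⊆ Bᶜ) :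
    stepOfQ q B (B ∪ W) =
      (∏ v ∈ W, forceProb q B v) * ∏ v ∈ Bᶜ \ W, (1 - forceProb q B v) := by
  have hnew : (B ∪ W) \ B = W :=
    union_sdiff_cancel_left (subset_compl_iff_disjoint_left.mp hW)
  have hwhite : (B ∪ W)ᶜ = Bᶜ \ W := by rw [compl_union, sdiff_eq_inter_compl]
  simp only [stepOfQ, forceProb, if_pos subset_union_left, hnew, hwhite, sub_sub_cancel]

theorem sum_stepOfQ_mul [Fintype V] (q : V → V → ℝ) (B : Finset V) (g : Finset V → ℝ) :
    ∑ B', stepOfQ q B B' * g B' = subsetExpect (forceProb q B) (fun W => g (B ∪ W)) Bᶜ := by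
  rw [← sum_filter_of_ne (p := fun B' => B ⊆ B') fun B' _ hB' => by
    by_contra hBB'
    simp [stepOfQ, hBB'] at hB']
  symm
  refine sum_nbij' (B ∪ ·) (· \ B) (fun W _ => by simp)
    (fun B' _ => by simp [subset_compl_iff_disjoint_right, disjoint_sdiff_self_left])
    (fun W hW => union_sdiff_cancel_left (subset_compl_iff_disjoint_left.mp (mem_powerset.mp hW)))
    (fun B' hB' => union_sdiff_of_subset (mem_filter.mp hB').2) fun W hW => ?_
  rw [stepOfQ_union q (mem_powerset.mp hW), mul_assoc]

section Trajectories

variable [Fintype V]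

/-- The probability, for the process with transition rule `step` and history `hist`, that `T`
is blue after `k` further rounds. -/
noncomputable def coverProb (step : List (Finset V) → Finset V → ℝ) (T : Finset V) :
    ℕ → List (Finset V) → ℝ
  | 0, hist => if T ⊆ hist.getLastD ∅ then 1 else 0
  | k + 1, hist => ∑ B', step hist B' * coverProb step T k (hist ++ [B'])

theorem sum_seqProbAux_eq_coverProb (step : List (Finset V) → Finset V → ℝ) (T : Finset V)
    (k : ℕ) (hist : List (Finset V)) :
    (∑ f : Fin k → Finset V,
      if T ⊆ (hist ++ List.ofFn f).getLastD ∅ then seqProbAux step hist (List.ofFn f) else 0) =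
      coverProb step T k hist := by
  induction k generalizing hist with
  | zero => simp [coverProb, seqProbAux]
  | succ k ih =>
    rw [← (Fin.consEquiv fun _ => Finset V).sum_comp, Fintype.sum_prod_type, coverProb]
    refine sum_congr rfl fun B' _ => ?_
    rw [← ih, mul_sum]
    refine sum_congr rfl fun f _ => ?_
    simp [Fin.consEquiv, List.ofFn_succ, seqProbAux, mul_ite]

theorem trajEventProb_eq_coverProb (step : List (Finset V) → Finset V → ℝ) (S T : Finset V)
    (ℓ : ℕ) :
    trajEventProb step S ℓ (fun traj => T ⊆ traj.getLastD ∅) = coverProb step T ℓ [S] := by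
  rw [trajEventProb, ← sum_seqProbAux_eq_coverProb]
  congr!

theorem coverProb_stepOfQ_le {q₁ q₂ : List (Finset V) → V → V → ℝ} (T : Finset V)
    (hq₁ : ∀ hist u v, 0 ≤ q₁ hist u v ∧ q₁ hist u v ≤ 1) (hq₂ : ∀ hist u v, q₂ hist u v ≤ 1)
    (hdom : ∀ hist₁ hist₂, hist₁.getLastD ∅ ⊆ hist₂.getLastD ∅ → ∀ v ∉ hist₂.getLastD ∅,
      forceProb (q₁ hist₁) (hist₁.getLastD ∅) v ≤ forceProb (q₂ hist₂) (hist₂.getLastD ∅) v)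
    (k : ℕ) {hist₁ hist₂ : List (Finset V)} (h : hist₁.getLastD ∅ ⊆ hist₂.getLastD ∅) :
    coverProb (fun hist => stepOfQ (q₁ hist) (hist.getLastD ∅)) T k hist₁ ≤
      coverProb (fun hist => stepOfQ (q₂ hist) (hist.getLastD ∅)) T k hist₂ := by
  induction k generalizing hist₁ hist₂ with
  | zero =>
    simp only [coverProb]
    split_ifs with hT₁ hT₂ <;> first | exact absurd (hT₁.trans h) hT₂ | norm_num
  | succ k ih =>
    simp only [coverProb, sum_stepOfQ_mul]
    refine subsetExpect_le_subsetExpect (compl_subset_compl.mpr h)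
      (fun v _ => ⟨forceProb_nonneg fun u _ => hq₁ _ u v,
        forceProb_le_one fun u _ => (hq₁ _ u v).2⟩)
      (fun v hv => hdom _ _ h v (mem_compl.mp hv))
      (fun v _ => forceProb_le_one fun u _ => hq₂ _ u v)
      fun X _ Y hXY => ih ?_
    simp only [List.getLastD_concat]
    intro x hx
    by_cases hx₂ : x ∈ hist₂.getLastD ∅
    · exact mem_union_left _ hx₂
    · exact mem_union_right _ <| hXY <| mem_inter.mpr
        ⟨(mem_union.mp hx).resolve_left fun hx₁ => hx₂ (h hx₁), mem_compl.mpr hx₂⟩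

end Trajectories

section Graph

variable {G : SimpleGraph V}

theorem edgeForceProb_nonneg (B : Finset V) (u v : V) : 0 ≤ edgeForceProb G B u v := by
  unfold edgeForceProb
  split_ifs <;> positivity

theorem AltForcing.edgeForceProb_le_q (A : AltForcing G) (i : ℕ) (hist : List (Finset V))
    (u v : V) : edgeForceProb G (hist.getLastD ∅) u v ≤ A.q i hist u v := by
  by_cases hi : i ∈ A.I
  · exact A.q_lower i hi hist u v
  · exact (A.q_std i hi hist u v).ge

variable [Fintype V]

theorem edgeForceProb_le_one (B : Finset V) (u v : V) : edgeForceProb G B u v ≤ 1 := by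
  unfold edgeForceProb
  split_ifs with h
  · exact div_le_one_of_le₀ (by exact_mod_cast closedDegIn_le_deg h.1 h.2.2) (Nat.cast_nonneg _)
  · exact zero_le_one

theorem edgeForceProb_mono {B C : Finset V} {u v : V} (hBC : B ⊆ C) (hv : v ∉ C) :
    edgeForceProb G B u v ≤ edgeForceProb G C u v := by
  unfold edgeForceProb
  split_ifs with hB hC
  · refine div_le_div_of_nonneg_right ?_ (Nat.cast_nonneg _)
    exact_mod_cast Set.ncard_le_ncard (Set.inter_subset_inter_right _ (by exact_mod_cast hBC))
  · exact absurd ⟨hB.1, hBC hB.2.1, hv⟩ hC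
  · positivity
  · exact le_rfl

theorem AltForcing.q_le_one (A : AltForcing G) (i : ℕ) (hist : List (Finset V)) (u v : V) :
    A.q i hist u v ≤ 1 := by
  by_cases hi : i ∈ A.I
  · exact A.q_upper i hi hist u v
  · exact (A.q_std i hi hist u v).trans_le (edgeForceProb_le_one _ u v)

theorem AltForcing.forceProb_edgeForceProb_le (A : AltForcing G) (i : ℕ)
    {B : Finset V} {hist : List (Finset V)} (hB : B ⊆ hist.getLastD ∅) {v : V}
    (hv : v ∉ hist.getLastD ∅) :
    forceProb (edgeForceProb G B) B v ≤ forceProb (A.q i hist) (hist.getLastD ∅) v :=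
  forceProb_mono hB
    (fun u _ => (edgeForceProb_mono hB hv).trans (A.edgeForceProb_le_q i hist u v))
    fun u _ => ⟨(edgeForceProb_nonneg _ u v).trans (A.edgeForceProb_le_q i hist u v),
      A.q_le_one i hist u v⟩

end Graph

end PZF

/-- For any alternative forcing process on `G` and any `S, T ⊆ V` and
`ℓ ≥ 0`, `P(A(S, T, ℓ)) ≤ P(Ã(S, T, ℓ))`: the probability that `T` is entirely blue after
`ℓ` rounds of the standard process started at `S` is at most the corresponding probability
for the alternative forcing process started at `S`. -/
theorem alt_forcing_coupling {V : Type*} [Fintype V] [DecidableEq V] (G : SimpleGraph V)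
    (A : PZF.AltForcing G) (S T : Finset V) (ℓ : ℕ) :
    PZF.trajEventProb (PZF.stdStep G) S ℓ (fun traj => T ⊆ traj.getLastD ∅) ≤
      PZF.trajEventProb (PZF.altStep G A) S ℓ (fun traj => T ⊆ traj.getLastD ∅) := by
  rw [PZF.trajEventProb_eq_coverProb, PZF.trajEventProb_eq_coverProb]
  exact PZF.coverProb_stepOfQ_le (q₁ := fun hist => PZF.edgeForceProb G (hist.getLastD ∅))
    (q₂ := fun hist => A.q (hist.length - 1) hist) T
    (fun _ u v => ⟨PZF.edgeForceProb_nonneg _ u v, PZF.edgeForceProb_le_one _ u v⟩)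
    (fun hist => A.q_le_one (hist.length - 1) hist)
    (fun _ hist₂ h _ hv => A.forceProb_edgeForceProb_le (hist₂.length - 1) h hv) ℓ subset_rfl
end

section
/- In G(n,p), run the alternative forcing process in which every blue vertex u forces each white neighbor independently with probability min{1, deg_{Y_{≤i}}[u]/d̃_L}, and suppose Y_{≤i} ⊆ V consists of the blue vertices after i ≥ 0 rounds. Let Y_{i+1} denote the set of white vertices forced in round i+1. Then for any S ⊆ V ∖ Y_{≤i}, conditioned on the event {Y_{i+1} = S}, on the set Y_{≤i}, and on the edges within Y_{≤i}, the number of edges e(Y_{≤i}, Y_{i+1}) between Y_{≤i} and Y_{i+1} is stochastically upper bounded by |S| + Bin(|Y_{≤i}|·|S|, p). -/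
open Finset Filter Real
open scoped Classical

namespace PZF

variable {V : Type*} [Fintype V] [DecidableEq V]

/-- Sample space for one round of the modified forcing rule on `G(n,p)` : a configuration of
potential edges together with a configuration of forcing coins for each ordered pair. -/
abbrev Omega (n : ℕ) := (Sym2 (Fin n) → Bool) × (Fin n × Fin n → Bool)

/-- Bernoulli weight. -/
noncomputable def bern (r : ℝ) (b : Bool) : ℝ := if b then r else 1 - r

/-- The modified forcing probability `min {1, deg_{Y₀}[u] / d̃_L}`, where the closed degree of
`u` into `Y₀` is computed in the exposed (conditioned) graph `H` of edges within `Y₀`. -/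
noncomputable def forceP (n : ℕ) (dL : ℝ) (H : SimpleGraph (Fin n)) (Y₀ : Finset (Fin n))
    (u : Fin n) : ℝ :=
  min 1 ((closedDegIn H Y₀ u : ℝ) / dL)

/-- The weight of a configuration: each potential edge appears independently with probability
`p`, and the forcing coin of a pair `(u, v)` with `u ∈ Y₀`, `v ∉ Y₀` succeeds independently
with probability `min {1, deg_{Y₀}[u] / d̃_L}` (the remaining coins are unused randomness). -/
noncomputable def wt (n : ℕ) (p dL : ℝ) (H : SimpleGraph (Fin n)) (Y₀ : Finset (Fin n))
    (ω : Omega n) : ℝ :=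
  (∏ e : Sym2 (Fin n), bern p (ω.1 e)) *
    ∏ x : Fin n × Fin n,
      bern (if x.1 ∈ Y₀ ∧ x.2 ∉ Y₀ then forceP n dL H Y₀ x.1 else p) (ω.2 x)

/-- Probability of an event, conditionally on the exposed edges within `Y₀` (recorded in `H`). -/
noncomputable def Pr (n : ℕ) (p dL : ℝ) (H : SimpleGraph (Fin n)) (Y₀ : Finset (Fin n))
    (E : Omega n → Prop) : ℝ :=
  ∑ ω : Omega n, if E ω then wt n p dL H Y₀ ω else 0

/-- `Y₁(u)`: the set of vertices of `V \\ Y₀` forced by `u` in this round, namely the white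
vertices `v` joined to `u` by an edge whose forcing coin succeeded. -/
noncomputable def Y1 (n : ℕ) (Y₀ : Finset (Fin n)) (u : Fin n) (ω : Omega n) : Finset (Fin n) :=
  Finset.univ.filter fun v => v ∉ Y₀ ∧ ω.1 s(u, v) = true ∧ ω.2 (u, v) = true

/-- `Y_{i+1}` : the set of all white vertices forced in this round. -/
noncomputable def forcedSet (n : ℕ) (B₀ : Finset (Fin n)) (ω : Omega n) : Finset (Fin n) :=
  Finset.univ.filter fun v => v ∉ B₀ ∧ ∃ u ∈ B₀, ω.1 s(u, v) = true ∧ ω.2 (u, v) = true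

/-- `e(A, B)` : the number of edges between the disjoint sets `A` and `B` (pairs `(u,v)` with
`u ∈ A`, `v ∈ B`, and `{u,v}` an edge of the random graph). -/
noncomputable def eCount (n : ℕ) (A B : Finset (Fin n)) (ω : Omega n) : ℕ :=
  ∑ u ∈ A, ∑ v ∈ B, if ω.1 s(u, v) = true then 1 else 0

/-- `P(Bin(m, p) ≥ k)`, the upper tail of the binomial distribution. -/
noncomputable def binTail (m : ℕ) (p : ℝ) (k : ℕ) : ℝ :=
  ∑ j ∈ Finset.range (m + 1),
    if k ≤ j then (m.choose j : ℝ) * p ^ j * (1 - p) ^ (m - j) else 0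

end PZF

namespace PZF

lemma bern_nonneg {r : ℝ} (h0 : 0 ≤ r) (h1 : r ≤ 1) (b : Bool) : 0 ≤ bern r b := by
  cases b <;> simp [bern] <;> linarith

lemma binTail_nonneg (m : ℕ) {p : ℝ} (hp0 : 0 ≤ p) (hp1 : p ≤ 1) (k : ℕ) :
    0 ≤ binTail m p k := by
  unfold binTail
  refine Finset.sum_nonneg fun j _ => ?_
  have h1p : (0:ℝ) ≤ 1 - p := by linarith
  split
  · positivity
  · exact le_refl 0

/-- A function `ι → Bool` viewed as a finset. -/
noncomputable def boolFinsetEquiv (ι : Type*) [Fintype ι] [DecidableEq ι] :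
    Finset ι ≃ (ι → Bool) where
  toFun s := fun i => decide (i ∈ s)
  invFun g := Finset.univ.filter (fun i => g i = true)
  left_inv s := by ext i; simp
  right_inv g := by funext i; simp

lemma binSum {ι : Type*} [Fintype ι] [DecidableEq ι] {p : ℝ} (hp0 : 0 ≤ p) (hp1 : p ≤ 1)
    (t : ℕ) :
    (∑ g : ι → Bool, if t ≤ (Finset.univ.filter (fun i => g i = true)).card
        then ∏ i, bern p (g i) else 0)
      = binTail (Fintype.card ι) p t := by
  classical
  rw [← Equiv.sum_comp (boolFinsetEquiv ι)]
  have key : ∀ s : Finset ι,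
      (if t ≤ (Finset.univ.filter (fun i => (boolFinsetEquiv ι s) i = true)).card
        then ∏ i, bern p ((boolFinsetEquiv ι s) i) else 0)
      = (if t ≤ s.card then p ^ s.card * (1 - p) ^ (Fintype.card ι - s.card) else 0) := by
    intro s
    have hfil : (Finset.univ.filter (fun i => (boolFinsetEquiv ι s) i = true)) = s := by
      ext i; simp [boolFinsetEquiv]
    rw [hfil]
    congr 1
    have : ∀ i, bern p ((boolFinsetEquiv ι s) i) = if i ∈ s then p else 1 - p := by
      intro i; by_cases h : i ∈ s <;> simp [boolFinsetEquiv, bern, h]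
    rw [Finset.prod_congr rfl (fun i _ => this i), Finset.prod_ite, Finset.prod_const,
      Finset.prod_const, Finset.filter_mem_eq_inter, Finset.univ_inter]
    congr 2
    · rw [← Finset.card_compl]
      congr 1
      ext i; simp
  rw [Finset.sum_congr rfl (fun s _ => key s)]
  rw [← Finset.powerset_univ, Finset.sum_powerset]
  unfold binTail
  rw [Finset.card_univ]
  refine Finset.sum_congr rfl fun j hj => ?_
  have hcard : ∀ s ∈ Finset.powersetCard j (Finset.univ : Finset ι), s.card = j := by
    intro s hs; exact (Finset.mem_powersetCard.mp hs).2
  rw [Finset.sum_congr rfl (fun s hs => by rw [hcard s hs])]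
  rw [Finset.sum_const, Finset.card_powersetCard, Finset.card_univ]
  rcases le_or_gt t j with h | h
  · simp [h, nsmul_eq_mul]; ring
  · simp [Nat.not_le.mpr h]

lemma binTail_zero (m : ℕ) {p : ℝ} (hp0 : 0 ≤ p) (hp1 : p ≤ 1) : binTail m p 0 = 1 := by
  unfold binTail
  simp only [Nat.zero_le, if_true]
  have := add_pow p (1 - p) m
  simp only [add_sub_cancel, one_pow] at this
  conv_rhs => rw [this]
  exact Finset.sum_congr rfl fun j _ => by ring

variable {n : ℕ}

/-- The coin parameter of position `x`. -/
noncomputable def cpr (n : ℕ) (p dL : ℝ) (H : SimpleGraph (Fin n)) (B₀ : Finset (Fin n))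
    (x : Fin n × Fin n) : ℝ :=
  if x.1 ∈ B₀ ∧ x.2 ∉ B₀ then forceP n dL H B₀ x.1 else p

lemma wt_eq (p dL : ℝ) (H : SimpleGraph (Fin n)) (B₀ : Finset (Fin n)) (ω : Omega n) :
    wt n p dL H B₀ ω = (∏ e : Sym2 (Fin n), bern p (ω.1 e)) *
      ∏ x : Fin n × Fin n, bern (cpr n p dL H B₀ x) (ω.2 x) := rfl

lemma cpr_nonneg {p dL : ℝ} (hp0 : 0 ≤ p) (hdL : 0 < dL) (H : SimpleGraph (Fin n))
    (B₀ : Finset (Fin n)) (x : Fin n × Fin n) : 0 ≤ cpr n p dL H B₀ x := by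
  unfold cpr forceP
  split
  · exact le_min zero_le_one (div_nonneg (Nat.cast_nonneg _) hdL.le)
  · exact hp0

lemma cpr_le_one {p dL : ℝ} (hp1 : p ≤ 1) (hdL : 0 < dL) (H : SimpleGraph (Fin n))
    (B₀ : Finset (Fin n)) (x : Fin n × Fin n) : cpr n p dL H B₀ x ≤ 1 := by
  unfold cpr forceP
  split
  · exact min_le_left _ _
  · exact hp1

lemma cpr_eq_p {p dL : ℝ} (H : SimpleGraph (Fin n)) (B₀ : Finset (Fin n))
    {x : Fin n × Fin n} (hx : x.1 ∉ B₀) : cpr n p dL H B₀ x = p := by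
  unfold cpr
  rw [if_neg]
  tauto

lemma wt_nonneg {p dL : ℝ} (hp0 : 0 ≤ p) (hp1 : p ≤ 1) (hdL : 0 < dL)
    (H : SimpleGraph (Fin n)) (B₀ : Finset (Fin n)) (ω : Omega n) :
    0 ≤ wt n p dL H B₀ ω := by
  rw [wt_eq]
  refine mul_nonneg (Finset.prod_nonneg fun e _ => bern_nonneg hp0 hp1 _)
    (Finset.prod_nonneg fun x _ => bern_nonneg (cpr_nonneg hp0 hdL H B₀ x)
      (cpr_le_one hp1 hdL H B₀ x) _)

lemma Pr_congr (p dL : ℝ) (H : SimpleGraph (Fin n)) (B₀ : Finset (Fin n))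
    {E E' : Omega n → Prop} (h : ∀ ω, E ω ↔ E' ω) :
    Pr n p dL H B₀ E = Pr n p dL H B₀ E' := by
  unfold Pr
  exact Finset.sum_congr rfl fun ω _ => by rw [if_congr (h ω) rfl rfl]

lemma Pr_nonneg {p dL : ℝ} (hp0 : 0 ≤ p) (hp1 : p ≤ 1) (hdL : 0 < dL)
    (H : SimpleGraph (Fin n)) (B₀ : Finset (Fin n)) (E : Omega n → Prop) :
    0 ≤ Pr n p dL H B₀ E := by
  unfold Pr
  refine Finset.sum_nonneg fun ω _ => ?_
  split
  · exact wt_nonneg hp0 hp1 hdL H B₀ ω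
  · exact le_refl 0

set_option maxHeartbeats 2000000 in
lemma Pr_eq_sum_filter (p dL : ℝ) (H : SimpleGraph (Fin n)) (B₀ : Finset (Fin n))
    (E : Omega n → Prop) :
    Pr n p dL H B₀ E = ∑ ω ∈ Finset.univ.filter E, wt n p dL H B₀ ω := by
  unfold Pr
  rw [Finset.sum_filter]

lemma factor {p dL : ℝ} (hp0 : 0 ≤ p) (hp1 : p ≤ 1) (hdL : 0 < dL)
    (H : SimpleGraph (Fin n)) (B₀ : Finset (Fin n))
    (P : Finset (Fin n × Fin n)) (hP : ∀ x ∈ P, x.1 ∉ B₀)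
    (E : Omega n → Prop)
    (hE : ∀ (a : Sym2 (Fin n) → Bool) (c c' : Fin n × Fin n → Bool),
      (∀ x, x ∉ P → c x = c' x) → (E (a, c) ↔ E (a, c')))
    (t : ℕ) :
    Pr n p dL H B₀ (fun ω => E ω ∧ t ≤ ∑ x ∈ P, (if ω.2 x = true then 1 else 0))
      = Pr n p dL H B₀ E * binTail P.card p t := by
  classical
  set r : (Fin n × Fin n) → ℝ := cpr n p dL H B₀ with hr
  set epi := Equiv.piEquivPiSubtypeProd (fun x : Fin n × Fin n => x ∈ P)
    (fun _ : Fin n × Fin n => Bool) with hepi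
  set M : ℝ := ∑ a : Sym2 (Fin n) → Bool, ∑ h : {x : Fin n × Fin n // ¬ x ∈ P} → Bool,
      (if E (a, epi.symm (fun _ => false, h)) then
        (∏ e, bern p (a e)) * ∏ x : {x : Fin n × Fin n // ¬ x ∈ P}, bern (r ↑x) (h x)
       else 0) with hM
  have master : ∀ t' : ℕ,
      Pr n p dL H B₀ (fun ω => E ω ∧ t' ≤ ∑ x ∈ P, (if ω.2 x = true then 1 else 0))
        = M * binTail P.card p t' := by
    intro t'
    rw [← Fintype.card_coe P, ← binSum (ι := {x : Fin n × Fin n // x ∈ P}) hp0 hp1 t']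
    have expand : Pr n p dL H B₀
          (fun ω => E ω ∧ t' ≤ ∑ x ∈ P, (if ω.2 x = true then 1 else 0))
        = ∑ a : Sym2 (Fin n) → Bool, ∑ c : Fin n × Fin n → Bool,
            if E (a, c) ∧ t' ≤ ∑ x ∈ P, (if c x = true then 1 else 0)
            then wt n p dL H B₀ (a, c) else 0 := by
      unfold Pr
      rw [Fintype.sum_prod_type]
      exact Finset.sum_congr rfl fun a _ => Finset.sum_congr rfl fun c _ => by congr
    rw [expand]
    have step : ∀ a : Sym2 (Fin n) → Bool,
        (∑ c : Fin n × Fin n → Bool,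
          if E (a, c) ∧ t' ≤ ∑ x ∈ P, (if c x = true then 1 else 0)
          then wt n p dL H B₀ (a, c) else 0)
        = (∑ h : {x : Fin n × Fin n // ¬ x ∈ P} → Bool,
            if E (a, epi.symm (fun _ => false, h)) then
              (∏ e, bern p (a e)) * ∏ x : {x : Fin n × Fin n // ¬ x ∈ P}, bern (r ↑x) (h x)
            else 0)
          * ∑ g : {x : Fin n × Fin n // x ∈ P} → Bool,
              if t' ≤ (Finset.univ.filter (fun i => g i = true)).card
              then ∏ i, bern p (g i) else 0 := by
      intro a
      rw [← Equiv.sum_comp epi.symm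
        (fun c : Fin n × Fin n → Bool =>
          if E (a, c) ∧ t' ≤ ∑ x ∈ P, (if c x = true then 1 else 0)
          then wt n p dL H B₀ (a, c) else 0), Fintype.sum_prod_type]
      beta_reduce
      have term : ∀ (g : {x : Fin n × Fin n // x ∈ P} → Bool)
          (h : {x : Fin n × Fin n // ¬ x ∈ P} → Bool),
          (if E (a, epi.symm (g, h)) ∧
              t' ≤ ∑ x ∈ P, (if (epi.symm (g, h)) x = true then 1 else 0)
            then wt n p dL H B₀ (a, epi.symm (g, h)) else 0)
          = (if E (a, epi.symm (fun _ => false, h)) then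
              (∏ e, bern p (a e)) * ∏ x : {x : Fin n × Fin n // ¬ x ∈ P}, bern (r ↑x) (h x)
             else 0)
            * (if t' ≤ (Finset.univ.filter (fun i => g i = true)).card
               then ∏ i, bern p (g i) else 0) := by
        intro g h
        have hc : ∀ x : Fin n × Fin n,
            (epi.symm (g, h)) x = if hx : x ∈ P then g ⟨x, hx⟩ else h ⟨x, hx⟩ := by
          intro x
          rw [hepi]
          exact @Equiv.piEquivPiSubtypeProd_symm_apply (Fin n × Fin n)
            (fun x => x ∈ P) (fun _ => Bool) inferInstance (g, h) x
        have hcnt : (∑ x ∈ P, (if (epi.symm (g, h)) x = true then 1 else 0))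
            = (Finset.univ.filter (fun i => g i = true)).card := by
          rw [← Finset.sum_coe_sort P (fun x => if (epi.symm (g, h)) x = true then 1 else 0)]
          have : ∀ x : {x : Fin n × Fin n // x ∈ P},
              (if (epi.symm (g, h)) ↑x = true then 1 else 0)
              = (if g x = true then 1 else 0) := by
            intro x
            rw [hc ↑x, dif_pos x.2]
          rw [Finset.sum_congr rfl fun x _ => this x, Finset.card_filter]
        have hev : E (a, epi.symm (g, h)) ↔ E (a, epi.symm (fun _ => false, h)) := by
          have hc0 : ∀ x : Fin n × Fin n,
              (epi.symm (fun _ => false, h)) x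
                = if hx : x ∈ P then (false : Bool) else h ⟨x, hx⟩ := by
            intro x
            rw [hepi]
            exact @Equiv.piEquivPiSubtypeProd_symm_apply (Fin n × Fin n)
              (fun x => x ∈ P) (fun _ => Bool) inferInstance ⟨fun _ => false, h⟩ x
          refine hE a _ _ fun x hx => ?_
          rw [hc x, dif_neg hx, hc0 x, dif_neg hx]
        have hwt : wt n p dL H B₀ (a, epi.symm (g, h))
            = ((∏ e, bern p (a e)) *
                ∏ x : {x : Fin n × Fin n // ¬ x ∈ P}, bern (r ↑x) (h x))
              * ∏ i : {x : Fin n × Fin n // x ∈ P}, bern p (g i) := by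
          have hw0 : wt n p dL H B₀ (a, epi.symm (g, h))
              = (∏ e, bern p (a e)) *
                  ∏ x : Fin n × Fin n, bern (r x) ((epi.symm (g, h)) x) := rfl
          rw [hw0]
          rw [← Fintype.prod_subtype_mul_prod_subtype (fun x : Fin n × Fin n => x ∈ P)
            (fun x => bern (r x) ((epi.symm (g, h)) x))]
          have h1 : ∀ i : {x : Fin n × Fin n // x ∈ P},
              bern (r ↑i) ((epi.symm (g, h)) ↑i) = bern p (g i) := by
            intro i
            rw [hc ↑i, dif_pos i.2, hr, cpr_eq_p H B₀ (hP ↑i i.2)]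
          have h2 : ∀ i : {x : Fin n × Fin n // ¬ x ∈ P},
              bern (r ↑i) ((epi.symm (g, h)) ↑i) = bern (r ↑i) (h i) := by
            intro i
            rw [hc ↑i, dif_neg i.2]
          rw [Finset.prod_congr rfl fun i _ => h1 i, Finset.prod_congr rfl fun i _ => h2 i]
          rw [← mul_assoc, mul_right_comm]
          congr 1
          convert rfl
        rw [hcnt, hwt]
        by_cases hA : E (a, epi.symm (g, h)) <;>
          by_cases hB : t' ≤ (Finset.univ.filter (fun i => g i = true)).card
        · rw [if_pos ⟨hA, hB⟩, if_pos (hev.mp hA), if_pos hB]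
        · rw [if_neg (by tauto), if_neg hB, mul_zero]
        · rw [if_neg (by tauto), if_neg (fun hh => hA (hev.mpr hh)), zero_mul]
        · rw [if_neg (by tauto), if_neg hB, mul_zero]
      rw [Finset.sum_congr rfl fun g _ => Finset.sum_congr rfl fun h _ => term g h]
      rw [Finset.sum_comm]
      rw [Finset.sum_congr rfl fun h _ => (Finset.mul_sum _ _ _).symm]
      exact (Finset.sum_mul _ _ _).symm
    rw [Finset.sum_congr rfl fun a _ => step a, ← Finset.sum_mul]
  rw [master t]
  have h0 : Pr n p dL H B₀ E = M := by
    have h1 := master 0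
    rw [Pr_congr p dL H B₀ (E' := E) (fun ω => by simp), binTail_zero _ hp0 hp1, mul_one] at h1
    exact h1
  rw [h0]

section Swap

variable (B₀ S : Finset (Fin n))

/-- The position `(u, v) ∈ B₀ × S` is to be swapped: its coin is off, or there is a
forcer of `v` strictly below `u`. -/
def inD (ω : Omega n) (x : Fin n × Fin n) : Prop :=
  x.1 ∈ B₀ ∧ x.2 ∈ S ∧ (ω.2 x = false ∨
    ∃ u', u' ∈ B₀ ∧ u' < x.1 ∧ ω.1 s(u', x.2) = true ∧ ω.2 (u', x.2) = true)

/-- The swapping involution: exchange the edge indicator of `s(u,v)` with the (unused)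
coin of the reversed pair `(v,u)`, for every swapped position `(u,v)`. -/
noncomputable def phi (ω : Omega n) : Omega n :=
  (fun e => if h : ∃ x : Fin n × Fin n, inD B₀ S ω x ∧ e = s(x.1, x.2)
      then ω.2 (h.choose.2, h.choose.1) else ω.1 e,
   fun y => if inD B₀ S ω (y.2, y.1) then ω.1 s(y.2, y.1) else ω.2 y)

variable {B₀ S}

lemma phi_snd_eq (ω : Omega n) (y : Fin n × Fin n) :
    (phi B₀ S ω).2 y = if inD B₀ S ω (y.2, y.1) then ω.1 s(y.2, y.1) else ω.2 y := rfl

lemma phi_snd_unchanged (ω : Omega n) {y : Fin n × Fin n} (hy : y.1 ∉ S) :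
    (phi B₀ S ω).2 y = ω.2 y := by
  rw [phi_snd_eq, if_neg]
  intro hc
  exact hy hc.2.1

variable (hS : ∀ w ∈ S, w ∉ B₀)
include hS

lemma inD_unique {ω : Omega n} {x x' : Fin n × Fin n} (hx : inD B₀ S ω x)
    (hx' : inD B₀ S ω x') (h : s(x.1, x.2) = s(x'.1, x'.2)) : x = x' := by
  rcases Sym2.eq_iff.mp h with ⟨h1, h2⟩ | ⟨h1, h2⟩
  · exact Prod.ext h1 h2
  · exact absurd hx.1 (h1 ▸ hS x'.2 hx'.2.1)

lemma phi_fst_swap (ω : Omega n) {x : Fin n × Fin n} (hx : inD B₀ S ω x) :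
    (phi B₀ S ω).1 s(x.1, x.2) = ω.2 (x.2, x.1) := by
  have hex : ∃ y : Fin n × Fin n, inD B₀ S ω y ∧ s(x.1, x.2) = s(y.1, y.2) := ⟨x, hx, rfl⟩
  show (if h : ∃ y : Fin n × Fin n, inD B₀ S ω y ∧ s(x.1, x.2) = s(y.1, y.2)
      then ω.2 (h.choose.2, h.choose.1) else ω.1 s(x.1, x.2)) = ω.2 (x.2, x.1)
  rw [dif_pos hex]
  have hspec := hex.choose_spec
  have : hex.choose = x := inD_unique hS hspec.1 hx hspec.2.symm
  rw [this]

omit hS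

lemma phi_fst_unchanged (ω : Omega n) {e : Sym2 (Fin n)}
    (he : ¬ ∃ x : Fin n × Fin n, inD B₀ S ω x ∧ e = s(x.1, x.2)) :
    (phi B₀ S ω).1 e = ω.1 e := by
  show (if h : ∃ x : Fin n × Fin n, inD B₀ S ω x ∧ e = s(x.1, x.2)
      then ω.2 (h.choose.2, h.choose.1) else ω.1 e) = ω.1 e
  rw [dif_neg he]

include hS

/-- Edges at `s(u, w)` with `u ∈ B₀` and `w ∉ S` are untouched. -/
lemma phi_fst_unchanged' (ω : Omega n) {u w : Fin n} (hu : u ∈ B₀) (hw : w ∉ S) :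
    (phi B₀ S ω).1 s(u, w) = ω.1 s(u, w) := by
  refine phi_fst_unchanged ω ?_
  rintro ⟨x, hx, hx2⟩
  rcases Sym2.eq_iff.mp hx2 with ⟨h1, h2⟩ | ⟨h1, h2⟩
  · exact hw (h2 ▸ hx.2.1)
  · exact hS x.2 hx.2.1 (h1 ▸ hu)

/-- Forcers below a given threshold exist in `phi ω` iff they exist in `ω`. -/
lemma exists_forcer_lt_phi_iff (ω : Omega n) {v : Fin n} (hv : v ∈ S) (u0 : Fin n) :
    (∃ u', u' ∈ B₀ ∧ u' < u0 ∧ (phi B₀ S ω).1 s(u', v) = true ∧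
        (phi B₀ S ω).2 (u', v) = true)
      ↔ (∃ u', u' ∈ B₀ ∧ u' < u0 ∧ ω.1 s(u', v) = true ∧ ω.2 (u', v) = true) := by
  have hcoin : ∀ u', u' ∈ B₀ → (phi B₀ S ω).2 (u', v) = ω.2 (u', v) := fun u' hu' =>
    phi_snd_unchanged ω (fun hmem => hS u' hmem hu')
  constructor
  · rintro ⟨w, hw, hwlt, hedge, hcn⟩
    rw [hcoin w hw] at hcn
    by_cases hD : inD B₀ S ω (w, v)
    · rcases hD.2.2 with hc | ⟨u1, hu1, hlt, he1, hc1⟩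
      · rw [hcn] at hc; cases hc
      · exact ⟨u1, hu1, hlt.trans hwlt, he1, hc1⟩
    · rw [phi_fst_unchanged ω ?_] at hedge
      · exact ⟨w, hw, hwlt, hedge, hcn⟩
      · rintro ⟨x, hx, hx2⟩
        rcases Sym2.eq_iff.mp hx2 with ⟨h1, h2⟩ | ⟨h1, h2⟩
        · exact hD (by rw [show (w, v) = x from Prod.ext h1 h2]; exact hx)
        · exact hS v hv (h2 ▸ hx.1)
  · rintro ⟨w, hw, hwlt, hedge, hcn⟩
    have hne : (B₀.filter fun u' =>
        u' < u0 ∧ ω.1 s(u', v) = true ∧ ω.2 (u', v) = true).Nonempty :=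
      ⟨w, Finset.mem_filter.mpr ⟨hw, hwlt, hedge, hcn⟩⟩
    set F := B₀.filter (fun u' =>
        u' < u0 ∧ ω.1 s(u', v) = true ∧ ω.2 (u', v) = true) with hF
    set m := F.min' hne with hm
    have hmem : m ∈ B₀.filter (fun u' =>
        u' < u0 ∧ ω.1 s(u', v) = true ∧ ω.2 (u', v) = true) := F.min'_mem hne
    obtain ⟨hmB, hmlt, hmedge, hmcn⟩ := Finset.mem_filter.mp hmem
    have hnD : ¬ inD B₀ S ω (m, v) := by
      rintro ⟨-, -, hc | ⟨u1, hu1, hlt, he1, hc1⟩⟩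
      · rw [hmcn] at hc; cases hc
      · have hu1F : u1 ∈ F := Finset.mem_filter.mpr ⟨hu1, hlt.trans hmlt, he1, hc1⟩
        exact absurd (F.min'_le u1 hu1F) (not_le.mpr hlt)
    refine ⟨m, hmB, hmlt, ?_, by rw [hcoin m hmB]; exact hmcn⟩
    rw [phi_fst_unchanged ω ?_]
    · exact hmedge
    · rintro ⟨x, hx, hx2⟩
      rcases Sym2.eq_iff.mp hx2 with ⟨h1, h2⟩ | ⟨h1, h2⟩
      · exact hnD (by rw [show (m, v) = x from Prod.ext h1 h2]; exact hx)
      · exact hS v hv (h2 ▸ hx.1)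

lemma inD_phi (ω : Omega n) (x : Fin n × Fin n) :
    inD B₀ S (phi B₀ S ω) x ↔ inD B₀ S ω x := by
  by_cases h1 : x.1 ∈ B₀
  · by_cases h2 : x.2 ∈ S
    · have hcoin : (phi B₀ S ω).2 x = ω.2 x :=
        phi_snd_unchanged ω (fun hmem => hS x.1 hmem h1)
      unfold inD
      rw [hcoin]
      simp only [h1, h2, true_and]
      exact or_congr Iff.rfl (exists_forcer_lt_phi_iff hS ω h2 x.1)
    · simp [inD, h2]
  · simp [inD, h1]

lemma phi_invol (ω : Omega n) : phi B₀ S (phi B₀ S ω) = ω := by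
  have hD := inD_phi hS (ω := ω)
  refine Prod.ext (funext fun e => ?_) (funext fun y => ?_)
  · show (phi B₀ S (phi B₀ S ω)).1 e = ω.1 e
    by_cases h : ∃ x : Fin n × Fin n, inD B₀ S ω x ∧ e = s(x.1, x.2)
    · obtain ⟨x, hx, rfl⟩ := h
      rw [phi_fst_swap hS (phi B₀ S ω) ((hD x).mpr hx), phi_snd_eq]
      rw [if_pos (show inD B₀ S ω ((x.2, x.1).2, (x.2, x.1).1) from hx)]
    · rw [phi_fst_unchanged (phi B₀ S ω)
        (fun ⟨x, hx, he⟩ => h ⟨x, (hD x).mp hx, he⟩)]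
      exact phi_fst_unchanged ω h
  · show (phi B₀ S (phi B₀ S ω)).2 y = ω.2 y
    rw [phi_snd_eq (phi B₀ S ω) y]
    by_cases hy : inD B₀ S ω (y.2, y.1)
    · rw [if_pos ((hD _).mpr hy)]
      rw [show s(y.2, y.1) = s((y.2, y.1).1, (y.2, y.1).2) from rfl,
        phi_fst_swap hS ω hy]
    · rw [if_neg (fun hh => hy ((hD _).mp hh)), phi_snd_eq, if_neg hy]

set_option maxHeartbeats 2000000 in
lemma wt_phi (p dL : ℝ) (H : SimpleGraph (Fin n)) (ω : Omega n) :
    wt n p dL H B₀ (phi B₀ S ω) = wt n p dL H B₀ ω := by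
  classical
  set Dfin := Finset.univ.filter (fun x : Fin n × Fin n => inD B₀ S ω x) with hDfin
  have hmemD : ∀ x : Fin n × Fin n, x ∈ Dfin ↔ inD B₀ S ω x := by
    intro x; rw [hDfin, Finset.mem_filter]; simp
  set M := Dfin.image (fun x : Fin n × Fin n => s(x.1, x.2)) with hMdef
  set T := Dfin.image (fun x : Fin n × Fin n => (x.2, x.1)) with hTdef
  have hinj : ∀ x ∈ Dfin, ∀ y ∈ Dfin, s(x.1, x.2) = s(y.1, y.2) → x = y :=
    fun x hx y hy h => inD_unique hS ((hmemD x).mp hx) ((hmemD y).mp hy) h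
  have hswapinj : ∀ x ∈ Dfin, ∀ y ∈ Dfin, (x.2, x.1) = (y.2, y.1) → x = y := by
    intro x _ y _ h
    exact Prod.ext (congrArg Prod.snd h) (congrArg Prod.fst h)
  have hmemT : ∀ y : Fin n × Fin n, y ∈ T ↔ inD B₀ S ω (y.2, y.1) := by
    intro y
    rw [hTdef]
    constructor
    · rintro hy
      obtain ⟨x, hx, rfl⟩ := Finset.mem_image.mp hy
      exact (hmemD x).mp hx
    · intro hy
      exact Finset.mem_image.mpr ⟨(y.2, y.1), (hmemD _).mpr hy, rfl⟩
  rw [wt_eq, wt_eq]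
  have E1 : (∏ e : Sym2 (Fin n), bern p ((phi B₀ S ω).1 e))
      = (∏ x ∈ Dfin, bern p (ω.2 (x.2, x.1))) * ∏ e ∈ Mᶜ, bern p (ω.1 e) := by
    rw [← Finset.prod_mul_prod_compl M (fun e => bern p ((phi B₀ S ω).1 e))]
    congr 1
    · rw [hMdef, Finset.prod_image hinj]
      refine Finset.prod_congr rfl fun x hx => ?_
      rw [phi_fst_swap hS ω ((hmemD x).mp hx)]
    · refine Finset.prod_congr rfl fun e he => ?_
      rw [phi_fst_unchanged ω ?_]
      rw [Finset.mem_compl] at he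
      rintro ⟨x, hx, rfl⟩
      exact he (Finset.mem_image.mpr ⟨x, (hmemD x).mpr hx, rfl⟩)
  have E1' : (∏ e : Sym2 (Fin n), bern p (ω.1 e))
      = (∏ x ∈ Dfin, bern p (ω.1 s(x.1, x.2))) * ∏ e ∈ Mᶜ, bern p (ω.1 e) := by
    rw [← Finset.prod_mul_prod_compl M (fun e => bern p (ω.1 e))]
    congr 1
    rw [hMdef, Finset.prod_image hinj]
  have E2 : (∏ x : Fin n × Fin n, bern (cpr n p dL H B₀ x) ((phi B₀ S ω).2 x))
      = (∏ x ∈ Dfin, bern p (ω.1 s(x.1, x.2)))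
        * ∏ y ∈ Tᶜ, bern (cpr n p dL H B₀ y) (ω.2 y) := by
    rw [← Finset.prod_mul_prod_compl T (fun y => bern (cpr n p dL H B₀ y) ((phi B₀ S ω).2 y))]
    congr 1
    · rw [hTdef, Finset.prod_image hswapinj]
      refine Finset.prod_congr rfl fun x hx => ?_
      have hx' := (hmemD x).mp hx
      rw [cpr_eq_p H B₀ (show (x.2, x.1).1 ∉ B₀ from hS x.2 hx'.2.1)]
      rw [phi_snd_eq, if_pos (show inD B₀ S ω ((x.2, x.1).2, (x.2, x.1).1) from hx')]
    · refine Finset.prod_congr rfl fun y hy => ?_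
      rw [Finset.mem_compl, hmemT] at hy
      rw [phi_snd_eq, if_neg hy]
  have E2' : (∏ x : Fin n × Fin n, bern (cpr n p dL H B₀ x) (ω.2 x))
      = (∏ x ∈ Dfin, bern p (ω.2 (x.2, x.1)))
        * ∏ y ∈ Tᶜ, bern (cpr n p dL H B₀ y) (ω.2 y) := by
    rw [← Finset.prod_mul_prod_compl T (fun y => bern (cpr n p dL H B₀ y) (ω.2 y))]
    congr 1
    rw [hTdef, Finset.prod_image hswapinj]
    refine Finset.prod_congr rfl fun x hx => ?_
    have hx' := (hmemD x).mp hx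
    rw [cpr_eq_p H B₀ (show (x.2, x.1).1 ∉ B₀ from hS x.2 hx'.2.1)]
  rw [E1, E2, E1', E2']
  ring

lemma forcedSet_phi (ω : Omega n) (hF : forcedSet n B₀ ω = S) :
    forcedSet n B₀ (phi B₀ S ω) = S := by
  have hmem : ∀ v, v ∈ forcedSet n B₀ ω ↔
      (v ∉ B₀ ∧ ∃ u ∈ B₀, ω.1 s(u, v) = true ∧ ω.2 (u, v) = true) := by
    intro v; unfold forcedSet; simp
  have hmem' : ∀ v, v ∈ forcedSet n B₀ (phi B₀ S ω) ↔
      (v ∉ B₀ ∧ ∃ u ∈ B₀, (phi B₀ S ω).1 s(u, v) = true ∧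
        (phi B₀ S ω).2 (u, v) = true) := by
    intro v; unfold forcedSet; simp
  ext v
  rw [hmem']
  by_cases hv : v ∈ S
  · simp only [hv, iff_true]
    refine ⟨hS v hv, ?_⟩
    have hvf : v ∈ forcedSet n B₀ ω := hF ▸ hv
    obtain ⟨-, u, hu, hedge, hcn⟩ := (hmem v).mp hvf
    have hne : (B₀.filter fun u' =>
        ω.1 s(u', v) = true ∧ ω.2 (u', v) = true).Nonempty :=
      ⟨u, Finset.mem_filter.mpr ⟨hu, hedge, hcn⟩⟩
    set F := B₀.filter (fun u' => ω.1 s(u', v) = true ∧ ω.2 (u', v) = true) with hFd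
    set m := F.min' hne with hm
    have hmm : m ∈ B₀.filter (fun u' =>
        ω.1 s(u', v) = true ∧ ω.2 (u', v) = true) := F.min'_mem hne
    obtain ⟨hmB, hmedge, hmcn⟩ := Finset.mem_filter.mp hmm
    have hnD : ¬ inD B₀ S ω (m, v) := by
      rintro ⟨-, -, hc | ⟨u1, hu1, hlt, he1, hc1⟩⟩
      · rw [hmcn] at hc; cases hc
      · have hu1F : u1 ∈ F := Finset.mem_filter.mpr ⟨hu1, he1, hc1⟩
        exact absurd (F.min'_le u1 hu1F) (not_le.mpr hlt)
    refine ⟨m, hmB, ?_, ?_⟩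
    · rw [phi_fst_unchanged ω ?_]
      · exact hmedge
      · rintro ⟨x, hx, hx2⟩
        rcases Sym2.eq_iff.mp hx2 with ⟨h1, h2⟩ | ⟨h1, h2⟩
        · exact hnD (by rw [show (m, v) = x from Prod.ext h1 h2]; exact hx)
        · exact hS v hv (h2 ▸ hx.1)
    · rw [phi_snd_unchanged ω (show (m, v).1 ∉ S from fun hmS => hS m hmS hmB)]
      exact hmcn
  · simp only [hv, iff_false]
    have hvnf : v ∉ forcedSet n B₀ ω := fun hvf => hv (hF ▸ hvf)
    rw [hmem v] at hvnf
    rintro ⟨hvB, u, hu, hedge, hcn⟩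
    refine hvnf ⟨hvB, u, hu, ?_, ?_⟩
    · rw [← phi_fst_unchanged' hS ω hu hv]
      exact hedge
    · rw [← phi_snd_unchanged ω (show (u, v).1 ∉ S from fun huS => hS u huS hu)]
      exact hcn

lemma count_bound (ω : Omega n) :
    eCount n B₀ S ω ≤ (∑ x ∈ S ×ˢ B₀, if (phi B₀ S ω).2 x = true then 1 else 0)
      + S.card := by
  have hsplit : eCount n B₀ S ω
      = ∑ v ∈ S, ∑ u ∈ B₀, (if ω.1 s(u, v) = true then 1 else 0) := by
    unfold eCount; exact Finset.sum_comm
  have hZ : (∑ x ∈ S ×ˢ B₀, if (phi B₀ S ω).2 x = true then 1 else 0)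
      = ∑ v ∈ S, ∑ u ∈ B₀, (if (phi B₀ S ω).2 (v, u) = true then 1 else 0) :=
    Finset.sum_product _ _ _
  have hcard : S.card = ∑ _v ∈ S, 1 := by rw [Finset.card_eq_sum_ones]
  rw [hsplit, hZ, hcard, ← Finset.sum_add_distrib]
  refine Finset.sum_le_sum fun v hv => ?_
  -- per column bound
  have hb : ∀ u ∈ B₀, inD B₀ S ω (u, v) →
      (if ω.1 s(u, v) = true then 1 else 0)
        ≤ (if (phi B₀ S ω).2 (v, u) = true then 1 else 0) := by
    intro u hu hD
    rw [phi_snd_eq, if_pos (show inD B₀ S ω ((v, u).2, (v, u).1) from hD)]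
  have split := Finset.sum_filter_add_sum_filter_not B₀
    (fun u => inD B₀ S ω (u, v)) (fun u => if ω.1 s(u, v) = true then 1 else 0)
  rw [← split]
  have hA : (∑ u ∈ B₀.filter (fun u => inD B₀ S ω (u, v)),
        (if ω.1 s(u, v) = true then 1 else 0))
      ≤ ∑ u ∈ B₀, (if (phi B₀ S ω).2 (v, u) = true then 1 else 0) := by
    refine le_trans (Finset.sum_le_sum fun u hu => hb u (Finset.mem_filter.mp hu).1
      ((Finset.mem_filter.mp hu).2)) ?_
    exact Finset.sum_le_sum_of_subset (Finset.filter_subset _ _)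
  have hcoin : ∀ {c : Fin n}, c ∈ B₀ → ¬ inD B₀ S ω (c, v) → ω.2 (c, v) = true := by
    intro c hcB hcnD
    rcases Bool.dichotomy (ω.2 (c, v)) with hcc | hcc
    · exact absurd ⟨hcB, hv, Or.inl hcc⟩ hcnD
    · exact hcc
  have hB : (∑ u ∈ B₀.filter (fun u => ¬ inD B₀ S ω (u, v)),
        (if ω.1 s(u, v) = true then 1 else 0)) ≤ 1 := by
    have hrw : (∑ u ∈ B₀.filter (fun u => ¬ inD B₀ S ω (u, v)),
        (if ω.1 s(u, v) = true then (1 : ℕ) else 0))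
        = ((B₀.filter (fun u => ¬ inD B₀ S ω (u, v))).filter
            (fun u => ω.1 s(u, v) = true)).card := by
      rw [Finset.sum_boole]
      simp
    rw [hrw]
    refine Finset.card_le_one.mpr ?_
    intro a ha b hb'
    simp only [Finset.mem_filter] at ha hb'
    obtain ⟨⟨haB, hanD⟩, hae⟩ := ha
    obtain ⟨⟨hbB, hbnD⟩, hbe⟩ := hb'
    by_contra hne
    rcases lt_trichotomy a b with hlt | heq | hlt
    · exact hbnD ⟨hbB, hv, Or.inr ⟨a, haB, hlt, hae, hcoin haB hanD⟩⟩
    · exact hne heq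
    · exact hanD ⟨haB, hv, Or.inr ⟨b, hbB, hlt, hbe, hcoin hbB hbnD⟩⟩
  omega

end Swap

end PZF

open PZF

/-- With the blue set `B₀ = Y_{≤ i}` and the edges within it exposed
(recorded in `H`), run one round of the modified forcing rule and let `Y_{i+1}` be the set of
newly forced vertices.  For any `S ⊆ V \\ B₀`, conditioned on `{Y_{i+1} = S}`, the number of
edges `e(B₀, Y_{i+1})` is stochastically upper bounded by `|S| + Bin(|B₀| |S|, p)`:
for every `k`, `P(e(B₀, S) ≥ k ∣ Y_{i+1} = S) ≤ P(|S| + Bin(|B₀| |S|, p) ≥ k)`. -/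
theorem edges_to_forced_stochastic_bound
    (n : ℕ) (p dL : ℝ) (hp0 : 0 ≤ p) (hp1 : p ≤ 1) (hdL : 0 < dL)
    (H : SimpleGraph (Fin n)) (B₀ : Finset (Fin n))
    (S : Finset (Fin n)) (hS : ∀ w ∈ S, w ∉ B₀) (k : ℕ) :
    PZF.Pr n p dL H B₀
        (fun ω => k ≤ PZF.eCount n B₀ S ω ∧ PZF.forcedSet n B₀ ω = S) /
      PZF.Pr n p dL H B₀ (fun ω => PZF.forcedSet n B₀ ω = S) ≤
    PZF.binTail (B₀.card * S.card) p (k - S.card) := by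
  classical
  have hwt0 : ∀ ω, 0 ≤ wt n p dL H B₀ ω := wt_nonneg hp0 hp1 hdL H B₀
  have key1 : Pr n p dL H B₀
        (fun ω => k ≤ eCount n B₀ S ω ∧ forcedSet n B₀ ω = S)
      ≤ Pr n p dL H B₀ (fun ω => forcedSet n B₀ ω = S ∧
          k - S.card ≤ ∑ x ∈ S ×ˢ B₀, (if ω.2 x = true then 1 else 0)) := by
    rw [Pr_eq_sum_filter, Pr_eq_sum_filter]
    refine le_trans (le_of_eq
      (Finset.sum_congr rfl fun ω _ => (wt_phi hS p dL H ω).symm)) ?_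
    refine le_trans (le_of_eq (Finset.sum_image (fun x _ y _ h => by
      have h2 := congrArg (phi B₀ S) h
      rwa [phi_invol hS, phi_invol hS] at h2)).symm) ?_
    refine Finset.sum_le_sum_of_subset_of_nonneg ?_ (fun ω _ _ => hwt0 ω)
    intro ω' hω'
    simp only [Finset.mem_image, Finset.mem_filter, Finset.mem_univ, true_and] at hω' ⊢
    obtain ⟨ω, ⟨hk, hF⟩, rfl⟩ := hω'
    exact ⟨forcedSet_phi hS ω hF,
      Nat.sub_le_iff_le_add.mpr (hk.trans (count_bound hS ω))⟩
  have hEdep : ∀ (a : Sym2 (Fin n) → Bool) (c c' : Fin n × Fin n → Bool),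
      (∀ x, x ∉ S ×ˢ B₀ → c x = c' x) →
      (forcedSet n B₀ (a, c) = S ↔ forcedSet n B₀ (a, c') = S) := by
    intro a c c' hagree
    have : forcedSet n B₀ (a, c) = forcedSet n B₀ (a, c') := by
      unfold forcedSet
      ext v
      simp only [Finset.mem_filter, Finset.mem_univ, true_and]
      refine and_congr Iff.rfl (exists_congr fun u => ?_)
      by_cases hu : u ∈ B₀
      · have hx : (u, v) ∉ S ×ˢ B₀ := fun hmem =>
          hS u (Finset.mem_product.mp hmem).1 hu
        rw [show c (u, v) = c' (u, v) from hagree (u, v) hx]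
      · simp [hu]
    rw [this]
  have key2 : Pr n p dL H B₀ (fun ω => forcedSet n B₀ ω = S ∧
        k - S.card ≤ ∑ x ∈ S ×ˢ B₀, (if ω.2 x = true then 1 else 0))
      = Pr n p dL H B₀ (fun ω => forcedSet n B₀ ω = S)
        * binTail ((S ×ˢ B₀).card) p (k - S.card) :=
    factor hp0 hp1 hdL H B₀ (S ×ˢ B₀)
      (fun x hx => hS x.1 (Finset.mem_product.mp hx).1)
      (fun ω => forcedSet n B₀ ω = S) hEdep (k - S.card)
  have hcard : (S ×ˢ B₀).card = B₀.card * S.card := by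
    rw [Finset.card_product]; ring
  rcases eq_or_lt_of_le (Pr_nonneg hp0 hp1 hdL H B₀
      (fun ω => forcedSet n B₀ ω = S)) with h0 | hpos
  · have hnum : Pr n p dL H B₀
        (fun ω => k ≤ eCount n B₀ S ω ∧ forcedSet n B₀ ω = S) = 0 := by
      refine le_antisymm (key1.trans ?_) (Pr_nonneg hp0 hp1 hdL H B₀ _)
      rw [key2, ← h0, zero_mul]
    rw [hnum, ← h0, zero_div]
    exact binTail_nonneg _ hp0 hp1 _
  · rw [div_le_iff₀ hpos]
    refine key1.trans ?_
    rw [key2, hcard]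
    exact le_of_eq (mul_comm _ _)
end
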